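/- Let p > −1/2 and define the relation ≃ on 𝒫ₚ by: (P,ψ) ≃ (P̃,ψ̃) iff κ₁^{−2/(1+2p)}·det P = κ̃₁^{−2/(1+2p)}·det P̃ and κ₁^{2p/(1+2p)}·ψ − κ̃₁^{2p/(1+2p)}·ψ̃ = 2p·(κ₁^{−1/(1+2p)}·κ₃ − κ̃₁^{−1/(1+2p)}·κ̃₃), where P = [[κ₁,κ₃],[κ₃,κ₂]] and P̃ = [[κ̃₁,κ̃₃],[κ̃₃,κ̃₂]]. Then: (i) the set {(P,ψ) ∈ 𝒫ₚ : κ₃ = 0 and κ₁ = 1} is a complete system of representatives of 𝒫ₚ modulo ≃, i.e. every (P,ψ) ∈ 𝒫ₚ is ≃-equivalent to exactly one element of this set; (ii) if p ≠ 0, the set {(P,ψ) ∈ 𝒫ₚ : ψ = 0 and κ₁ = 1} is likewise a complete system of representatives of 𝒫ₚ modulo ≃. -/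

import Mathlib

open Matrix MeasureTheory Filter

noncomputable section

def matJ : Matrix (Fin 2) (Fin 2) ℝ := !![0, -1; 1, 0]

def Dpsi (p ψ a : ℝ) : Matrix (Fin 2) (Fin 2) ℝ :=
  if p = 0 then !![1, 0; ψ * Real.log a, 1]
  else !![1, 0; ψ / (2 * p), 1] * !![a ^ p, 0; 0, a ^ (-p)] * !![1, 0; -ψ / (2 * p), 1]

def HPpsi (p ψ : ℝ) (P : Matrix (Fin 2) (Fin 2) ℝ) (a : ℝ) : Matrix (Fin 2) (Fin 2) ℝ :=
  Dpsi p ψ a * P * (Dpsi p ψ a)ᵀ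

def SatRec (p : ℝ) (P : Matrix (Fin 2) (Fin 2) ℝ) (ψ : ℝ) (α β : ℕ → ℝ) : Prop :=
  α 0 = 1 ∧ β 0 = 0 ∧ ∀ n : ℕ,
    !![α (n + 1), β (n + 1)] =
      (-1 / (((n : ℝ) + 1) * (2 * p + (n : ℝ) + 1))) •
        (!![α n, β n] * (P * matJ * !![2 * p + (n : ℝ) + 1, 0; ψ, (n : ℝ) + 1]))

def genF (c : ℕ → ℝ) (z : ℂ) : ℂ := ∑' n : ℕ, (c n : ℂ) * z ^ n

def rowAB (p ψ : ℝ) (α β : ℕ → ℝ) (a : ℝ) (z : ℂ) : Matrix (Fin 1) (Fin 2) ℂ :=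
  !![((a ^ p : ℝ) : ℂ) * genF α ((a : ℂ) * z), ((a ^ p : ℝ) : ℂ) * genF β ((a : ℂ) * z)] *
    ((Dpsi p ψ a)⁻¹).map Complex.ofReal

/-- The parameter class 𝒫ₚ. -/
def PClass (p : ℝ) (P : Matrix (Fin 2) (Fin 2) ℝ) (ψ : ℝ) : Prop :=
  P.PosSemidef ∧
    ((p ≠ 0 ∧ P.mulVec ![1, 0] ≠ 0 ∧ P.mulVec ![-ψ, 2 * p] ≠ 0) ∨
     (p = 0 ∧ ((LinearMap.ker P.mulVecLin = ⊥ ∧ ψ = 0) ∨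
               (P.mulVec ![1, 0] ≠ 0 ∧ ψ ≠ 0))))
/-- The relation ≃ on 𝒫ₚ (equality of the induced measures). -/
def simRel (p : ℝ) (Pψ Qφ : Matrix (Fin 2) (Fin 2) ℝ × ℝ) : Prop :=
  (Pψ.1 0 0) ^ (-2 / (1 + 2 * p)) * Pψ.1.det =
    (Qφ.1 0 0) ^ (-2 / (1 + 2 * p)) * Qφ.1.det ∧
  (Pψ.1 0 0) ^ (2 * p / (1 + 2 * p)) * Pψ.2 -
      (Qφ.1 0 0) ^ (2 * p / (1 + 2 * p)) * Qφ.2 =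
    2 * p * ((Pψ.1 0 0) ^ (-1 / (1 + 2 * p)) * Pψ.1 0 1 -
      (Qφ.1 0 0) ^ (-1 / (1 + 2 * p)) * Qφ.1 0 1)


/-! The relation `≃` says exactly that the two quantities
`d = κ₁^(-2/(1+2p)) det P` and `u = κ₁^(2p/(1+2p)) ψ - 2p κ₁^(-1/(1+2p)) κ₃` agree, and membership
in `𝒫ₚ` says exactly that `P ⪰ 0`, `κ₁ > 0` and `(d, u) ≠ (0, 0)`: with `s = κ₁^(-1/(1+2p))`,
`s² κ₁ · vᵀPv = u² + 4p² d` for `v = (-ψ, 2p)`. A positive semidefinite `Q` with `Q₀₀ = 1` is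
`!![1, b; b, det Q + b²]` and has invariants `(det Q, φ - 2pb)`, so prescribing `(d, u)` together
with `b = 0`, or with `φ = 0` when `p ≠ 0`, determines `(Q, φ)` uniquely. -/

namespace Matrix

variable {P : Matrix (Fin 2) (Fin 2) ℝ}

lemma PosSemidef.apply_one_zero (hP : P.PosSemidef) : P 1 0 = P 0 1 := by
  simpa using hP.1.apply 0 1

lemma apply_zero_zero_mul_dotProduct_mulVec (hsym : P 1 0 = P 0 1) (v : Fin 2 → ℝ) :
    P 0 0 * (star v ⬝ᵥ P *ᵥ v) = (P 0 0 * v 0 + P 0 1 * v 1) ^ 2 + P.det * v 1 ^ 2 := by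
  simp only [dotProduct, mulVec, Fin.sum_univ_two, Pi.star_apply, star_trivial, det_fin_two, hsym]
  ring

lemma PosSemidef.mulVec_eq_zero_iff_apply_zero_zero (hP : P.PosSemidef) :
    P *ᵥ ![1, 0] = 0 ↔ P 0 0 = 0 := by
  rw [← hP.dotProduct_mulVec_zero_iff]
  simp [dotProduct, mulVec, Fin.sum_univ_two]

lemma ker_mulVecLin_eq_bot_iff_det_ne_zero {n : Type*} [Fintype n] [DecidableEq n]
    {M : Matrix n n ℝ} : LinearMap.ker M.mulVecLin = ⊥ ↔ M.det ≠ 0 := by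
  rw [ker_mulVecLin_eq_bot_iff, Ne, ← exists_mulVec_eq_zero_iff]
  grind

end Matrix

open Matrix

section Invariants

variable {p ψ : ℝ} {P : Matrix (Fin 2) (Fin 2) ℝ}

def detInvariant (p : ℝ) (P : Matrix (Fin 2) (Fin 2) ℝ) : ℝ :=
  P 0 0 ^ (-2 / (1 + 2 * p)) * P.det

def psiInvariant (p : ℝ) (P : Matrix (Fin 2) (Fin 2) ℝ) (ψ : ℝ) : ℝ :=
  P 0 0 ^ (2 * p / (1 + 2 * p)) * ψ - 2 * p * (P 0 0 ^ (-1 / (1 + 2 * p)) * P 0 1)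

lemma simRel_iff {Q : Matrix (Fin 2) (Fin 2) ℝ} {φ : ℝ} :
    simRel p (P, ψ) (Q, φ) ↔
      detInvariant p P = detInvariant p Q ∧ psiInvariant p P ψ = psiInvariant p Q φ := by
  unfold simRel detInvariant psiInvariant
  exact and_congr Iff.rfl ⟨fun h ↦ by linarith, fun h ↦ by linarith⟩

lemma detInvariant_nonneg (hP : P.PosSemidef) : 0 ≤ detInvariant p P :=
  mul_nonneg (Real.rpow_nonneg hP.diag_nonneg _) hP.det_nonneg

lemma detInvariant_ne_zero_iff (hκ : 0 < P 0 0) : detInvariant p P ≠ 0 ↔ P.det ≠ 0 := by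
  simp [detInvariant, (Real.rpow_pos_of_pos hκ _).ne']

lemma detInvariant_eq_sq_mul_det (hκ : 0 < P 0 0) :
    detInvariant p P = (P 0 0 ^ (-1 / (1 + 2 * p))) ^ 2 * P.det := by
  rw [detInvariant, ← Real.rpow_mul_natCast hκ.le]
  congr 2
  push_cast
  ring

lemma psiInvariant_eq_mul (hp : 1 + 2 * p ≠ 0) (hκ : 0 < P 0 0) :
    psiInvariant p P ψ = P 0 0 ^ (-1 / (1 + 2 * p)) * (P 0 0 * ψ - 2 * p * P 0 1) := by
  have : P 0 0 ^ (2 * p / (1 + 2 * p)) = P 0 0 * P 0 0 ^ (-1 / (1 + 2 * p)) := by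
    rw [show 2 * p / (1 + 2 * p) = 1 + -1 / (1 + 2 * p) by field_simp; ring,
      Real.rpow_add hκ, Real.rpow_one]
  rw [psiInvariant, this]
  ring

lemma psiInvariant_zero : psiInvariant 0 P ψ = ψ := by
  simp [psiInvariant]

lemma detInvariant_of_apply_zero_zero_eq_one (h : P 0 0 = 1) : detInvariant p P = P.det := by
  simp [detInvariant, h]

lemma psiInvariant_of_apply_zero_zero_eq_one (h : P 0 0 = 1) :
    psiInvariant p P ψ = ψ - 2 * p * P 0 1 := by
  simp [psiInvariant, h]

lemma Matrix.PosSemidef.mulVec_ne_zero_iff_invariants (hP : P.PosSemidef) (hp : 1 + 2 * p ≠ 0)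
    (hκ : 0 < P 0 0) :
    P *ᵥ ![-ψ, 2 * p] ≠ 0 ↔ psiInvariant p P ψ ≠ 0 ∨ (p ≠ 0 ∧ detInvariant p P ≠ 0) := by
  set s := P 0 0 ^ (-1 / (1 + 2 * p))
  have hs : 0 < s := Real.rpow_pos_of_pos hκ _
  have hq : s ^ 2 * (P 0 0 * (star ![-ψ, 2 * p] ⬝ᵥ P *ᵥ ![-ψ, 2 * p])) =
      psiInvariant p P ψ ^ 2 + 4 * p ^ 2 * detInvariant p P := by
    rw [apply_zero_zero_mul_dotProduct_mulVec hP.apply_one_zero, psiInvariant_eq_mul hp hκ,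
      detInvariant_eq_sq_mul_det hκ]
    simp only [cons_val_zero, cons_val_one]
    ring
  have hd := detInvariant_nonneg (p := p) hP
  have hzero : star ![-ψ, 2 * p] ⬝ᵥ P *ᵥ ![-ψ, 2 * p] = 0 ↔
      psiInvariant p P ψ ^ 2 + 4 * p ^ 2 * detInvariant p P = 0 := by
    rw [← hq]
    simp [hs.ne', hκ.ne']
  have hsum : psiInvariant p P ψ ^ 2 + 4 * p ^ 2 * detInvariant p P = 0 ↔
      psiInvariant p P ψ = 0 ∧ (p = 0 ∨ detInvariant p P = 0) := by
    constructor
    · intro h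
      have hu : psiInvariant p P ψ = 0 := by nlinarith [sq_nonneg (psiInvariant p P ψ), sq_nonneg p]
      rw [hu] at h
      exact ⟨hu, by simpa using h⟩
    · rintro ⟨hu, hpd | hpd⟩ <;> rw [hu] <;> simp [hpd]
  rw [Ne, ← hP.dotProduct_mulVec_zero_iff, hzero, hsum]
  tauto

lemma PClass.apply_zero_zero_pos (hP : PClass p P ψ) : 0 < P 0 0 := by
  obtain ⟨hpsd, hcases⟩ := hP
  have he₁ : P *ᵥ ![1, 0] ≠ 0 := by
    rcases hcases with ⟨-, he₁, -⟩ | ⟨-, ⟨hker, -⟩ | ⟨he₁, -⟩⟩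
    · exact he₁
    · intro h
      simpa using congrFun (ker_mulVecLin_eq_bot_iff.1 hker _ h) 0
    · exact he₁
  rw [Ne, hpsd.mulVec_eq_zero_iff_apply_zero_zero] at he₁
  exact hpsd.diag_nonneg.lt_of_ne' he₁

theorem pClass_iff (hp : 1 + 2 * p ≠ 0) :
    PClass p P ψ ↔
      P.PosSemidef ∧ 0 < P 0 0 ∧ (detInvariant p P ≠ 0 ∨ psiInvariant p P ψ ≠ 0) := by
  suffices key : ∀ hP : P.PosSemidef, 0 < P 0 0 → (PClass p P ψ ↔
      detInvariant p P ≠ 0 ∨ psiInvariant p P ψ ≠ 0) from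
    ⟨fun h ↦ ⟨h.1, h.apply_zero_zero_pos, (key h.1 h.apply_zero_zero_pos).1 h⟩,
      fun ⟨hP, hκ, h⟩ ↦ (key hP hκ).2 h⟩
  intro hP hκ
  have he₁ : P *ᵥ ![1, 0] ≠ 0 := by
    rw [Ne, hP.mulVec_eq_zero_iff_apply_zero_zero]
    exact hκ.ne'
  rw [PClass, hP.mulVec_ne_zero_iff_invariants hp hκ, ker_mulVecLin_eq_bot_iff_det_ne_zero,
    ← detInvariant_ne_zero_iff (p := p) hκ]
  rcases eq_or_ne p 0 with rfl | hp₀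
  · rw [psiInvariant_zero]
    tauto
  · tauto

end Invariants

section Normalized

def normalizedMatrix (b d : ℝ) : Matrix (Fin 2) (Fin 2) ℝ := !![1, b; b, d + b ^ 2]

variable {b d : ℝ}

@[simp] lemma normalizedMatrix_apply_zero_zero : normalizedMatrix b d 0 0 = 1 := rfl

@[simp] lemma normalizedMatrix_apply_zero_one : normalizedMatrix b d 0 1 = b := rfl

@[simp] lemma det_normalizedMatrix : (normalizedMatrix b d).det = d := by
  rw [normalizedMatrix, det_fin_two_of]
  ring

lemma posSemidef_normalizedMatrix (hd : 0 ≤ d) : (normalizedMatrix b d).PosSemidef := by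
  have hsym : normalizedMatrix b d 1 0 = normalizedMatrix b d 0 1 := rfl
  refine posSemidef_iff_dotProduct_mulVec.2 ⟨?_, fun v ↦ ?_⟩
  · ext i j
    fin_cases i <;> fin_cases j <;> rfl
  · have hq := apply_zero_zero_mul_dotProduct_mulVec hsym v
    simp only [normalizedMatrix_apply_zero_zero, normalizedMatrix_apply_zero_one,
      det_normalizedMatrix, one_mul] at hq
    rw [hq]
    positivity

lemma Matrix.PosSemidef.eq_normalizedMatrix {Q : Matrix (Fin 2) (Fin 2) ℝ} (hQ : Q.PosSemidef)
    (h : Q 0 0 = 1) : Q = normalizedMatrix (Q 0 1) Q.det := by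
  conv_lhs => rw [eta_fin_two Q]
  rw [normalizedMatrix, det_fin_two, h, hQ.apply_one_zero]
  ring_nf

end Normalized

section Representatives

variable {p ψ : ℝ} {P : Matrix (Fin 2) (Fin 2) ℝ}

theorem existsUnique_normalized_simRel (hp : 1 + 2 * p ≠ 0) (hP : PClass p P ψ)
    (side : ℝ → ℝ → Prop)
    (hside : ∃! bφ : ℝ × ℝ, side bφ.1 bφ.2 ∧ bφ.2 - 2 * p * bφ.1 = psiInvariant p P ψ) :
    ∃! Qφ : Matrix (Fin 2) (Fin 2) ℝ × ℝ,
      (PClass p Qφ.1 Qφ.2 ∧ side (Qφ.1 0 1) Qφ.2 ∧ Qφ.1 0 0 = 1) ∧ simRel p (P, ψ) Qφ := by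
  obtain ⟨⟨b, φ⟩, ⟨hs, hu⟩, huniq⟩ := hside
  obtain ⟨hPpsd, -, hinv⟩ := (pClass_iff hp).1 hP
  have hdet : detInvariant p (normalizedMatrix b (detInvariant p P)) = detInvariant p P := by
    rw [detInvariant_of_apply_zero_zero_eq_one rfl, det_normalizedMatrix]
  have hpsi : psiInvariant p (normalizedMatrix b (detInvariant p P)) φ = psiInvariant p P ψ := by
    rw [psiInvariant_of_apply_zero_zero_eq_one rfl, normalizedMatrix_apply_zero_one, hu]
  refine ⟨(normalizedMatrix b (detInvariant p P), φ), ⟨⟨?_, hs, rfl⟩, ?_⟩, ?_⟩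
  · exact (pClass_iff hp).2 ⟨posSemidef_normalizedMatrix (detInvariant_nonneg hPpsd), one_pos,
      by rwa [hdet, hpsi]⟩
  · exact simRel_iff.2 ⟨hdet.symm, hpsi.symm⟩
  · rintro ⟨Q, φ'⟩ ⟨⟨hQ, hs', hQ₀₀⟩, hsim⟩
    dsimp only at hQ hs' hQ₀₀
    rw [simRel_iff, detInvariant_of_apply_zero_zero_eq_one hQ₀₀,
      psiInvariant_of_apply_zero_zero_eq_one hQ₀₀] at hsim
    obtain ⟨hb, hφ⟩ := Prod.ext_iff.1 (huniq (Q 0 1, φ') ⟨hs', hsim.2.symm⟩)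
    dsimp only at hb hφ
    rw [((pClass_iff hp).1 hQ).1.eq_normalizedMatrix hQ₀₀, hb, hφ, ← hsim.1]

end Representatives

/-- complete systems of representatives of 𝒫ₚ modulo ≃. -/
theorem statement19 (p : ℝ) (hp : -(1/2 : ℝ) < p) :
    (∀ P : Matrix (Fin 2) (Fin 2) ℝ, ∀ ψ : ℝ, PClass p P ψ →
      ∃! Qφ : Matrix (Fin 2) (Fin 2) ℝ × ℝ,
        (PClass p Qφ.1 Qφ.2 ∧ Qφ.1 0 1 = 0 ∧ Qφ.1 0 0 = 1) ∧ simRel p (P, ψ) Qφ) ∧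
    (p ≠ 0 →
      ∀ P : Matrix (Fin 2) (Fin 2) ℝ, ∀ ψ : ℝ, PClass p P ψ →
        ∃! Qφ : Matrix (Fin 2) (Fin 2) ℝ × ℝ,
          (PClass p Qφ.1 Qφ.2 ∧ Qφ.2 = 0 ∧ Qφ.1 0 0 = 1) ∧ simRel p (P, ψ) Qφ) := by
  have hp' : 1 + 2 * p ≠ 0 := by linarith
  refine ⟨fun P ψ hP ↦ existsUnique_normalized_simRel hp' hP (fun b _ ↦ b = 0) ?_,
    fun hp₀ P ψ hP ↦ existsUnique_normalized_simRel hp' hP (fun _ φ ↦ φ = 0) ?_⟩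
  · refine ⟨(0, psiInvariant p P ψ), by simp, ?_⟩
    rintro ⟨b, φ⟩ ⟨rfl, h⟩
    simpa using h
  · refine ⟨(-psiInvariant p P ψ / (2 * p), 0), ⟨rfl, by field_simp; ring⟩, ?_⟩
    rintro ⟨b, φ⟩ ⟨rfl, h⟩
    simp only [Prod.mk.injEq, and_true]
    field_simp
    linarith
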